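/- Let E be a finite-dimensional real vector space and P ⊆ E a polytope with 0 ∈ P whose affine span is E. Let G₁,…,G_k (k ≥ 1) be closed convex subsets of P such that: (i) each Gᵢ is an extreme subset (face) of P of positive dimension (its vector span is nonzero); (ii) setting H = vectorSpan(G₁) + ⋯ + vectorSpan(G_k) and r = dim E − dim H, we have 0 ≤ r < dim E; (iii) (Gᵢ + H) ∩ P = Gᵢ for each i, where Gᵢ + H is the Minkowski sum; and (iv) the family {G₁,…,G_k} is maximal with respect to inclusion among finite families of positive-dimensional closed convex extreme subsets of P satisfying (iii) and whose vector spans sum to a subspace of codimension r in E. Let F be a finite-dimensional real vector space and f : E → F a surjective linear map with kernel H. Then f, viewed as an affine map, is an extreme point of {g : E → F affine | g(P) ⊆ f(P)}; that is, every face-collapse is a vertex map. -/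

import Mathlib

/-!
The image `Q = f(P)` is the convex hull of its finitely many vertices (a minimal generating
subset consists of vertices), so these vertices affinely span `F`. By (iii), `f` collapses each face
`Gᵢ` to a single vertex of `Q`. Hence the set `Z` of points of `P` sent to vertices of `Q` affinely
spans `E`: its image spans `F` and its vector span contains every `vectorSpan Gᵢ`, hence `ker f`.
If `f` lies in the open segment between `g₁, g₂` mapping `P` into `Q`, then for `x ∈ Z` the vertex
`f x` lies in the open segment between `g₁ x, g₂ x ∈ Q`, so `g₁ x = g₂ x = f x`; affine maps that
agree on an affinely spanning set coincide.
-/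

open Pointwise Set

section LinearOrderedField

variable {𝕜 E : Type*} [Field 𝕜] [LinearOrder 𝕜] [IsStrictOrderedRing 𝕜]
  [AddCommGroup E] [Module 𝕜 E]

lemma mem_extremePoints_convexHull_insert {x : E} {s : Set E} (hx : x ∉ convexHull 𝕜 s) :
    x ∈ (convexHull 𝕜 (insert x s)).extremePoints 𝕜 := by
  rcases s.eq_empty_or_nonempty with rfl | hs
  · simp
  rw [convexHull_insert hs]
  refine mem_extremePoints_iff_left.2
    ⟨subset_convexJoin_left hs.convexHull (mem_singleton x), ?_⟩
  simp only [mem_convexJoin, mem_singleton_iff, exists_eq_left]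
  rintro y ⟨u, hu, p, α, -, hα, hpα, rfl⟩ z ⟨v, hv, q, β, -, hβ, hqβ, rfl⟩
    ⟨a, b, ha, hb, hab, hxyz⟩
  -- `x = a • y + b • z` exhibits `x` as a convex combination of `u` and `v` unless `y = x`.
  obtain rfl | hα := hα.eq_or_lt
  · simp [(add_zero p).symm.trans hpα]
  have hc : 0 < a * α + b * β := by positivity
  refine (hx ?_).elim
  have hcx : (a * α + b * β) • x = (a * α) • u + (b * β) • v := by
    obtain rfl : p = 1 - α := by linarith
    obtain rfl : q = 1 - β := by linarith
    linear_combination (norm := module) -hxyz + hab • x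
  have := convex_convexHull 𝕜 s hu hv (by positivity : 0 ≤ a * α / (a * α + b * β))
    (by positivity : 0 ≤ b * β / (a * α + b * β)) (by field_simp)
  convert this using 1
  rw [div_eq_inv_mul, div_eq_inv_mul, mul_smul, mul_smul (_ : 𝕜)⁻¹, ← smul_add, ← hcx, smul_smul,
    inv_mul_cancel₀ hc.ne', one_smul]

lemma Set.Finite.convexHull_extremePoints_convexHull {s : Set E} (hs : s.Finite) :
    convexHull 𝕜 ((convexHull 𝕜 s).extremePoints 𝕜) = convexHull 𝕜 s := by
  classical
  lift s to Finset E using hs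
  obtain ⟨t, -, hmin⟩ := exists_minimal_le_of_wellFoundedLT
    (fun t : Finset E ↦ convexHull 𝕜 (t : Set E) = convexHull 𝕜 (s : Set E)) s rfl
  rw [← hmin.prop]
  have ht_ext : (t : Set E) ⊆ (convexHull 𝕜 (t : Set E)).extremePoints 𝕜 := by
    intro x hx
    have hxt : (t : Set E) = insert x ↑(t.erase x) := by
      rw [Finset.coe_erase, insert_sdiff_singleton, Set.insert_eq_of_mem hx]
    rw [hxt]
    refine mem_extremePoints_convexHull_insert fun hx' ↦ ?_
    have hle : t ≤ t.erase x := hmin.le_of_le (hmin.prop ▸ ?_) (Finset.erase_subset x t)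
    · exact Finset.notMem_erase x t (hle hx)
    refine (convexHull_mono (Finset.coe_subset.2 (Finset.erase_subset x t))).antisymm ?_
    rw [hxt]
    exact convexHull_min (Set.insert_subset hx' (subset_convexHull 𝕜 _)) (convex_convexHull 𝕜 _)
  exact (convexHull_min extremePoints_subset (convex_convexHull 𝕜 _)).antisymm
    (convexHull_mono ht_ext)

lemma Set.Finite.affineSpan_extremePoints_convexHull {s : Set E} (hs : s.Finite) :
    affineSpan 𝕜 ((convexHull 𝕜 s).extremePoints 𝕜) = affineSpan 𝕜 s := by
  rw [← affineSpan_convexHull, hs.convexHull_extremePoints_convexHull, affineSpan_convexHull]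

end LinearOrderedField

section Ring

variable {𝕜 E F : Type*} [Ring 𝕜] [AddCommGroup E] [Module 𝕜 E]
  [AddCommGroup F] [Module 𝕜 F]

lemma LinearMap.image_eq_singleton_of_vectorSpan_le_ker (f : E →ₗ[𝕜] F) {G : Set E} {x : E}
    (hx : x ∈ G) (hG : vectorSpan 𝕜 G ≤ LinearMap.ker f) : f '' G = {f x} := by
  refine (image_subset_iff.2 fun y hy ↦ ?_).antisymm (singleton_subset_iff.2 ⟨x, hx, rfl⟩)
  have : y - x ∈ LinearMap.ker f := hG (vsub_mem_vectorSpan 𝕜 hy hx)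
  rwa [LinearMap.mem_ker, map_sub, sub_eq_zero] at this

lemma LinearMap.preimage_image_eq_add_ker (f : E →ₗ[𝕜] F) (G : Set E) :
    f ⁻¹' (f '' G) = G + (LinearMap.ker f : Set E) := by
  ext y
  refine ⟨fun ⟨x, hx, hxy⟩ ↦ ⟨x, hx, y - x, ?_, add_sub_cancel x y⟩, ?_⟩
  · rw [SetLike.mem_coe, LinearMap.mem_ker, map_sub, hxy, sub_self]
  · rintro ⟨x, hx, v, hv, rfl⟩
    exact ⟨x, hx, by rw [map_add, LinearMap.mem_ker.1 hv, add_zero]⟩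

lemma affineSpan_eq_top_of_affineSpan_image_eq_top (f : E →ₗ[𝕜] F) {Z : Set E}
    (hker : LinearMap.ker f ≤ vectorSpan 𝕜 Z) (hZ : affineSpan 𝕜 (f '' Z) = ⊤) :
    affineSpan 𝕜 Z = ⊤ := by
  have hne : Z.Nonempty := (AffineSubspace.nonempty_of_affineSpan_eq_top 𝕜 F F hZ).of_image
  rw [AffineSubspace.affineSpan_eq_top_iff_vectorSpan_eq_top_of_nonempty 𝕜 E E hne]
  rw [AffineSubspace.affineSpan_eq_top_iff_vectorSpan_eq_top_of_nonempty 𝕜 F F (hne.image f),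
    ← LinearMap.coe_toAffineMap, ← AffineMap.map_vectorSpan] at hZ
  change Submodule.map f _ = ⊤ at hZ
  have := Submodule.comap_map_eq f (vectorSpan 𝕜 Z)
  rwa [hZ, Submodule.comap_top, sup_eq_left.2 hker, eq_comm] at this

end Ring

section OrderedRing

variable {𝕜 E F : Type*} [Ring 𝕜] [PartialOrder 𝕜] [IsOrderedRing 𝕜] [AddCommGroup E]
  [Module 𝕜 E] [AddCommGroup F] [Module 𝕜 F]

lemma IsExtreme.image_of_inter_preimage_subset {P G : Set E} (f : E →ᵃ[𝕜] F) (hP : Convex 𝕜 P)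
    (hG : IsExtreme 𝕜 P G) (hsat : P ∩ f ⁻¹' (f '' G) ⊆ G) : IsExtreme 𝕜 (f '' P) (f '' G) := by
  refine ⟨image_mono hG.subset, ?_⟩
  rintro _ ⟨p₁, hp₁, rfl⟩ _ ⟨p₂, hp₂, rfl⟩ y hyG hy
  rw [← image_openSegment] at hy
  obtain ⟨w, hw, rfl⟩ := hy
  have hwG : w ∈ G := hsat ⟨hP.openSegment_subset hp₁ hp₂ hw, hyG⟩
  exact mem_image_of_mem f (hG.left_mem_of_mem_openSegment hp₁ hp₂ hwG hw)

lemma LinearMap.mem_extremePoints_image_of_isExtreme (f : E →ₗ[𝕜] F) {P G : Set E}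
    (hP : Convex 𝕜 P) (hG : IsExtreme 𝕜 P G) (hGker : vectorSpan 𝕜 G ≤ LinearMap.ker f)
    (hsat : (G + (LinearMap.ker f : Set E)) ∩ P ⊆ G) {x : E} (hx : x ∈ G) :
    f x ∈ (f '' P).extremePoints 𝕜 := by
  have hfG := hG.image_of_inter_preimage_subset f.toAffineMap hP
    (by rwa [LinearMap.coe_toAffineMap, f.preimage_image_eq_add_ker, inter_comm])
  rwa [LinearMap.coe_toAffineMap, f.image_eq_singleton_of_vectorSpan_le_ker hx hGker,
    isExtreme_singleton] at hfG

end OrderedRing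

section OrderedCommRing

variable {𝕜 E F : Type*} [CommRing 𝕜] [PartialOrder 𝕜] [AddCommGroup E] [Module 𝕜 E]
  [AddCommGroup F] [Module 𝕜 F]

lemma AffineMap.mem_extremePoints_setOf_mapsTo {P Z : Set E} {Q : Set F} {f : E →ᵃ[𝕜] F}
    (hf : MapsTo f P Q) (hZP : Z ⊆ P) (hZ : affineSpan 𝕜 Z = ⊤)
    (hfZ : MapsTo f Z (Q.extremePoints 𝕜)) :
    f ∈ {g : E →ᵃ[𝕜] F | MapsTo g P Q}.extremePoints 𝕜 := by
  refine mem_extremePoints.2 ⟨hf, fun g₁ hg₁ g₂ hg₂ hseg ↦ ?_⟩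
  have hagree (x : E) (hx : x ∈ Z) : g₁ x = f x ∧ g₂ x = f x := by
    refine (mem_extremePoints.1 (hfZ hx)).2 _ (hg₁ (hZP hx)) _ (hg₂ (hZP hx)) ?_
    obtain ⟨a, b, ha, hb, hab, rfl⟩ := hseg
    exact ⟨a, b, ha, hb, hab, rfl⟩
  exact ⟨ext_on hZ fun x hx ↦ (hagree x hx).1, ext_on hZ fun x hx ↦ (hagree x hx).2⟩

end OrderedCommRing

theorem face_collapse_is_vertex_general
    {E F : Type*} [NormedAddCommGroup E] [NormedSpace ℝ E]
    [AddCommGroup F] [Module ℝ F]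
    (P : Set E)
    (hP : ∃ SP : Finset E, P = convexHull ℝ (SP : Set E))
    (hPspan : affineSpan ℝ P = ⊤)
    (k : ℕ) (G : Fin k → Set E)
    (H : Submodule ℝ E) (hH : H = ⨆ i, vectorSpan ℝ (G i))
    -- (i) each `Gᵢ` is a positive-dimensional face of `P`
    (hface : ∀ i, IsClosed (G i) ∧ Convex ℝ (G i) ∧ IsExtreme ℝ P (G i) ∧
      vectorSpan ℝ (G i) ≠ ⊥)
    -- (iii) `(Gᵢ + H) ∩ P = Gᵢ`
    (hiii : ∀ i, (G i + (H : Set E)) ∩ P = G i)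
    (f : E →ₗ[ℝ] F) (hfsurj : Function.Surjective f)
    (hker : LinearMap.ker f = H) :
    f.toAffineMap ∈ Set.extremePoints ℝ {g : E →ᵃ[ℝ] F | ∀ x ∈ P, g x ∈ f '' P} := by
  obtain ⟨SP, hSP⟩ := hP
  have hPconv : Convex ℝ P := hSP ▸ convex_convexHull ℝ _
  have hGker i : vectorSpan ℝ (G i) ≤ LinearMap.ker f :=
    hker ▸ hH ▸ le_iSup (fun j ↦ vectorSpan ℝ (G j)) i
  set Z := P ∩ f ⁻¹' (f '' P).extremePoints ℝ
  have hGZ i : G i ⊆ Z := fun x hx ↦ ⟨(hface i).2.2.1.subset hx,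
    f.mem_extremePoints_image_of_isExtreme hPconv (hface i).2.2.1 (hGker i) (hker ▸ hiii i).le hx⟩
  have hQ : affineSpan ℝ ((f '' P).extremePoints ℝ) = ⊤ := by
    have hspan := f.toAffineMap.span_eq_top_of_surjective hfsurj hPspan
    rw [LinearMap.coe_toAffineMap, hSP, f.image_convexHull, affineSpan_convexHull] at hspan
    rwa [hSP, f.image_convexHull, (SP.finite_toSet.image f).affineSpan_extremePoints_convexHull]
  have hZ : affineSpan ℝ Z = ⊤ := by
    refine affineSpan_eq_top_of_affineSpan_image_eq_top f ?_ ?_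
    · rw [hker, hH]
      exact iSup_le fun i ↦ vectorSpan_mono ℝ (hGZ i)
    · rwa [image_inter_preimage, inter_eq_right.2 extremePoints_subset]
  exact AffineMap.mem_extremePoints_setOf_mapsTo (fun x hx ↦ mem_image_of_mem f hx)
    inter_subset_left hZ fun x hx ↦ hx.2

/-- Every face-collapse is a vertex map. If `G₁,…,G_k` is a family of
positive-dimensional faces of a polytope `P ∋ 0` with full affine span, satisfying
conditions (i)–(iv) of the definition of a face-collapse, and `f : E → F` is a surjective
linear map with kernel `H = vectorSpan(G₁) + ⋯ + vectorSpan(G_k)`, then `f` (as an affine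
map) is an extreme point of `{g affine | g(P) ⊆ f(P)}`. -/
theorem face_collapse_is_vertex
    {E F : Type*} [NormedAddCommGroup E] [NormedSpace ℝ E] [FiniteDimensional ℝ E]
    [AddCommGroup F] [Module ℝ F] [FiniteDimensional ℝ F]
    (P : Set E)
    (hP : ∃ SP : Finset E, P = convexHull ℝ (SP : Set E))
    (h0P : (0 : E) ∈ P)
    (hPspan : affineSpan ℝ P = ⊤)
    (k : ℕ) (hk : 1 ≤ k) (G : Fin k → Set E)
    (H : Submodule ℝ E) (hH : H = ⨆ i, vectorSpan ℝ (G i))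
    (r : ℕ) (hr : r = Module.finrank ℝ E - Module.finrank ℝ ↥H)
    (hrlt : r < Module.finrank ℝ E)
    -- (i) each `Gᵢ` is a positive-dimensional face of `P`
    (hface : ∀ i, IsClosed (G i) ∧ Convex ℝ (G i) ∧ IsExtreme ℝ P (G i) ∧
      vectorSpan ℝ (G i) ≠ ⊥)
    -- (iii) `(Gᵢ + H) ∩ P = Gᵢ`
    (hiii : ∀ i, (G i + (H : Set E)) ∩ P = G i)
    -- (iv) maximality among finite families of positive-dimensional faces satisfying (iii)
    -- whose vector spans sum to a subspace of codimension `r`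
    (hiv : ∀ 𝒢 : Set (Set E), 𝒢.Finite → Set.range G ⊆ 𝒢 →
      (∀ A ∈ 𝒢, IsClosed A ∧ Convex ℝ A ∧ IsExtreme ℝ P A ∧ vectorSpan ℝ A ≠ ⊥) →
      Module.finrank ℝ E - Module.finrank ℝ ↥(⨆ A ∈ 𝒢, vectorSpan ℝ A) = r →
      (∀ A ∈ 𝒢, (A + ((⨆ B ∈ 𝒢, vectorSpan ℝ B : Submodule ℝ E) : Set E)) ∩ P = A) →
      𝒢 = Set.range G)
    (f : E →ₗ[ℝ] F) (hfsurj : Function.Surjective f)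
    (hker : LinearMap.ker f = H) :
    f.toAffineMap ∈ Set.extremePoints ℝ {g : E →ᵃ[ℝ] F | ∀ x ∈ P, g x ∈ f '' P} :=
  face_collapse_is_vertex_general P hP hPspan k G H hH hface hiii f hfsurj hker
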